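/- arXiv:1710.01870 — 2 statements merged into one kernel-verified Lean document; each statement's English description precedes it below -/
import Mathlib

section
/- Suppose α <₂ β in R₂, X ⊆ α is finite, and Y is a nonempty finite subset of [α, β). Then cofinally in α there are copies of Y that maintain ≤₁-connections to β: for every η < α there exist a finite set Ỹ ⊆ α with η < min Ỹ and X < Ỹ and an isomorphism h : X ∪ Y → X ∪ Ỹ (as substructures of R₂) fixing X pointwise and mapping Y onto Ỹ, such that for every y ∈ Y with y <₁ β the corresponding element h(y) satisfies h(y) <₁ α. -/
open Ordinal

noncomputable section

/-- The least epsilon number: the least fixed point of `ξ ↦ ω ^ ξ`. -/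
def eps0 : Ordinal := sInf {ξ : Ordinal | Ordinal.omega0 ^ ξ = ξ}

namespace R2

/-- Terms of the language `{≤, ≤₁, ≤₂}`: existentially quantified variables,
universally quantified variables, and parameters (ordinal constants). -/
inductive Trm : Type 1 where
  | evar : ℕ → Trm
  | avar : ℕ → Trm
  | cst  : Ordinal → Trm

def Trm.val (v w : ℕ → Ordinal) : Trm → Ordinal
  | .evar n => v n
  | .avar n => w n
  | .cst c  => c

/-- Quantifier-free formulas in the language `{≤, ≤₁, ≤₂}`. -/
inductive QF : Type 1 where
  | le  : Trm → Trm → QF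
  | le1 : Trm → Trm → QF
  | le2 : Trm → Trm → QF
  | not : QF → QF
  | and : QF → QF → QF
  | or  : QF → QF → QF

def QF.eval (r1 r2 : Ordinal → Ordinal → Prop) (v w : ℕ → Ordinal) : QF → Prop
  | .le s t  => s.val v w ≤ t.val v w
  | .le1 s t => r1 (s.val v w) (t.val v w)
  | .le2 s t => r2 (s.val v w) (t.val v w)
  | .not φ   => ¬ φ.eval r1 r2 v w
  | .and φ ψ => φ.eval r1 r2 v w ∧ ψ.eval r1 r2 v w
  | .or φ ψ  => φ.eval r1 r2 v w ∨ ψ.eval r1 r2 v w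

def Trm.NoAvar : Trm → Prop
  | .avar _ => False
  | _ => True

def QF.NoAvar : QF → Prop
  | .le s t  => s.NoAvar ∧ t.NoAvar
  | .le1 s t => s.NoAvar ∧ t.NoAvar
  | .le2 s t => s.NoAvar ∧ t.NoAvar
  | .not φ   => φ.NoAvar
  | .and φ ψ => φ.NoAvar ∧ ψ.NoAvar
  | .or φ ψ  => φ.NoAvar ∧ ψ.NoAvar

def Trm.CstBelow (δ : Ordinal) : Trm → Prop
  | .cst c => c < δ
  | _ => True

def QF.CstBelow (δ : Ordinal) : QF → Prop
  | .le s t  => s.CstBelow δ ∧ t.CstBelow δ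
  | .le1 s t => s.CstBelow δ ∧ t.CstBelow δ
  | .le2 s t => s.CstBelow δ ∧ t.CstBelow δ
  | .not φ   => φ.CstBelow δ
  | .and φ ψ => φ.CstBelow δ ∧ ψ.CstBelow δ
  | .or φ ψ  => φ.CstBelow δ ∧ ψ.CstBelow δ

/-- Satisfaction of a Σ₁-formula (an existential block in front of a
quantifier-free formula without universal variables) in the segment of
ordinals `< δ`, with the indicated interpretations of `≤₁` and `≤₂`. -/
def Sat1 (r1 r2 : Ordinal → Ordinal → Prop) (δ : Ordinal) (φ : QF) : Prop :=
  ∃ v : ℕ → Ordinal, (∀ n, v n < δ) ∧ φ.eval r1 r2 v v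

/-- Satisfaction of a Σ₂-formula (a block of existential quantifiers followed
by a block of universal quantifiers in front of a quantifier-free formula) in
the segment of ordinals `< δ`. -/
def Sat2 (r1 r2 : Ordinal → Ordinal → Prop) (δ : Ordinal) (φ : QF) : Prop :=
  ∃ v : ℕ → Ordinal, (∀ n, v n < δ) ∧
    ∀ w : ℕ → Ordinal, (∀ n, w n < δ) → φ.eval r1 r2 v w

/-- `(α; ≤, ≤₁, ≤₂)` is a Σ₁-elementary substructure of `(β; ≤, ≤₁, ≤₂)`:
Σ₁-sentences with parameters `< α` hold in `α` iff they hold in `β`. -/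
def Sig1Elem (r1 r2 : Ordinal → Ordinal → Prop) (α β : Ordinal) : Prop :=
  ∀ φ : QF, φ.NoAvar → φ.CstBelow α → (Sat1 r1 r2 α φ ↔ Sat1 r1 r2 β φ)

/-- `(α; ≤, ≤₁, ≤₂)` is a Σ₂-elementary substructure of `(β; ≤, ≤₁, ≤₂)`. -/
def Sig2Elem (r1 r2 : Ordinal → Ordinal → Prop) (α β : Ordinal) : Prop :=
  ∀ φ : QF, φ.CstBelow α → (Sat2 r1 r2 α φ ↔ Sat2 r1 r2 β φ)

/-- The simultaneous recursive (in `β`) definition of `α ≤₁ β` (`i = false`)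
and `α ≤₂ β` (`i = true`): `α ≤ᵢ β` iff `α ≤ β` and `(α; ≤, ≤₁, ≤₂)` is a
Σᵢ-elementary substructure of `(β; ≤, ≤₁, ≤₂)`, where the relations `≤₁, ≤₂`
are the restrictions to the segment below `β`, already defined by recursion. -/
noncomputable def leAux : Ordinal → Bool → Ordinal → Prop :=
  WellFounded.fix Ordinal.lt_wf fun β IH i α =>
    α ≤ β ∧
      (match i with
        | false => Sig1Elem
        | true  => Sig2Elem)
        (fun x y => ∃ h : y < β, IH y h false x)
        (fun x y => ∃ h : y < β, IH y h true x) α β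

/-- `α ≤₁ β` in the structure `R₂`. -/
def le1 (α β : Ordinal) : Prop := leAux β false α

/-- `α ≤₂ β` in the structure `R₂`. -/
def le2 (α β : Ordinal) : Prop := leAux β true α

def lt1 (α β : Ordinal) : Prop := le1 α β ∧ α < β

def lt2 (α β : Ordinal) : Prop := le2 α β ∧ α < β

/-- `h` is an isomorphism (w.r.t. `≤, ≤₁, ≤₂`) on the set `A`. -/
def IsoOn (h : Ordinal → Ordinal) (A : Set Ordinal) : Prop :=
  ∀ x ∈ A, ∀ y ∈ A,
    (x ≤ y ↔ h x ≤ h y) ∧ (le1 x y ↔ le1 (h x) (h y)) ∧ (le2 x y ↔ le2 (h x) (h y))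

end R2

/-!
Enumerate `Y` and replace its elements by variables. "There is a tuple with the same
`≤, ≤₁, ≤₂`-diagram over `X` as `Y`, lying above `η`, such that for every `w`, each entry
whose original `y` satisfies `y <₁ β` is `≤₁ w` as soon as it is `≤ w`" is a Σ₂-sentence with
parameters below `α`. It holds in `β`, witnessed by `Y` itself, because `y ≤₁ β` gives
`y ≤₁ w` for all `w ∈ [y, β]`. By `α ≤₂ β` it holds in `α`. Since `α <₁ β`, `α` is a limit,
and an entry `y'` with `y' ≤₁ w` for all `w ∈ [y', α)` satisfies `y' ≤₁ α`: a Σ₁-sentence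
true in `α` uses finitely many witnesses, so it is true in some `γ + 1 < α` with `y' ≤ γ`, and
hence in `y'`.
-/

namespace R2

open Order

variable {r1 r2 : Ordinal → Ordinal → Prop} {α β δ η : Ordinal} {v w : ℕ → Ordinal}

def relBelow (r : Ordinal → Ordinal → Prop) (β : Ordinal) (x y : Ordinal) : Prop :=
  ∃ _ : y < β, r x y

theorem leAux_eq (β : Ordinal) (i : Bool) (α : Ordinal) :
    leAux β i α =
      (α ≤ β ∧
        (match i with
          | false => Sig1Elem
          | true  => Sig2Elem) (relBelow le1 β) (relBelow le2 β) α β) := by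
  conv_lhs => rw [leAux, WellFounded.fix_eq]
  rfl

theorem Trm.val_lt (hv : ∀ n, v n < δ) (hw : ∀ n, w n < δ) {t : Trm} (ht : t.CstBelow δ) :
    t.val v w < δ := by
  cases t with
  | evar n => exact hv n
  | avar n => exact hw n
  | cst c => exact ht

theorem Trm.CstBelow.mono {δ' : Ordinal} (h : δ ≤ δ') {t : Trm} (ht : t.CstBelow δ) :
    t.CstBelow δ' := by
  cases t with
  | cst c => exact ht.trans_le h
  | _ => trivial

theorem QF.CstBelow.mono {δ' : Ordinal} (h : δ ≤ δ') {φ : QF} (hφ : φ.CstBelow δ) :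
    φ.CstBelow δ' := by
  induction φ with
  | le s t | le1 s t | le2 s t => exact ⟨hφ.1.mono h, hφ.2.mono h⟩
  | not φ ih => exact ih hφ
  | and φ ψ ihφ ihψ | or φ ψ ihφ ihψ => exact ⟨ihφ hφ.1, ihψ hφ.2⟩

theorem QF.eval_relBelow_iff (hδ : δ ≤ β) (hv : ∀ n, v n < δ) (hw : ∀ n, w n < δ) {φ : QF}
    (hφ : φ.CstBelow δ) :
    φ.eval (relBelow r1 β) (relBelow r2 β) v w ↔ φ.eval r1 r2 v w := by
  induction φ with
  | le s t => rfl
  | le1 s t | le2 s t => exact exists_prop_of_true ((Trm.val_lt hv hw hφ.2).trans_le hδ)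
  | not φ ih => exact not_congr (ih hφ)
  | and φ ψ ihφ ihψ => exact and_congr (ihφ hφ.1) (ihψ hφ.2)
  | or φ ψ ihφ ihψ => exact or_congr (ihφ hφ.1) (ihψ hφ.2)

theorem sat1_relBelow_iff (hδ : δ ≤ β) {φ : QF} (hφ : φ.CstBelow δ) :
    Sat1 (relBelow r1 β) (relBelow r2 β) δ φ ↔ Sat1 r1 r2 δ φ :=
  exists_congr fun _ => and_congr_right fun hv => QF.eval_relBelow_iff hδ hv hv hφ

theorem sat2_relBelow_iff (hδ : δ ≤ β) {φ : QF} (hφ : φ.CstBelow δ) :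
    Sat2 (relBelow r1 β) (relBelow r2 β) δ φ ↔ Sat2 r1 r2 δ φ :=
  exists_congr fun _ => and_congr_right fun hv => forall_congr' fun _ =>
    imp_congr_right fun hw => QF.eval_relBelow_iff hδ hv hw hφ

theorem sig1Elem_relBelow_iff (hαβ : α ≤ β) :
    Sig1Elem (relBelow r1 β) (relBelow r2 β) α β ↔ Sig1Elem r1 r2 α β :=
  forall_congr' fun _ => imp_congr_right fun _ => imp_congr_right fun hφ => by
    rw [sat1_relBelow_iff hαβ hφ, sat1_relBelow_iff le_rfl (hφ.mono hαβ)]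

theorem sig2Elem_relBelow_iff (hαβ : α ≤ β) :
    Sig2Elem (relBelow r1 β) (relBelow r2 β) α β ↔ Sig2Elem r1 r2 α β :=
  forall_congr' fun _ => imp_congr_right fun hφ => by
    rw [sat2_relBelow_iff hαβ hφ, sat2_relBelow_iff le_rfl (hφ.mono hαβ)]

theorem le1_iff_sig1Elem : le1 α β ↔ α ≤ β ∧ Sig1Elem le1 le2 α β := by
  rw [le1, leAux_eq]
  exact and_congr_right sig1Elem_relBelow_iff

theorem le2_iff_sig2Elem : le2 α β ↔ α ≤ β ∧ Sig2Elem le1 le2 α β := by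
  rw [le2, leAux_eq]
  exact and_congr_right sig2Elem_relBelow_iff

def Trm.evarBound : Trm → ℕ
  | .evar n => n + 1
  | _ => 0

def QF.evarBound : QF → ℕ
  | .le s t | .le1 s t | .le2 s t => max s.evarBound t.evarBound
  | .not φ => φ.evarBound
  | .and φ ψ | .or φ ψ => max φ.evarBound ψ.evarBound

theorem Trm.val_congr {t : Trm} (ht : t.NoAvar) {v' w' : ℕ → Ordinal}
    (h : ∀ n < t.evarBound, v n = v' n) : t.val v w = t.val v' w' := by
  cases t with
  | evar n => exact h n n.lt_succ_self
  | avar n => exact ht.elim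
  | cst c => rfl

theorem QF.eval_congr {φ : QF} (hφ : φ.NoAvar) {v' w' : ℕ → Ordinal}
    (h : ∀ n < φ.evarBound, v n = v' n) : φ.eval r1 r2 v w ↔ φ.eval r1 r2 v' w' := by
  induction φ with
  | le s t | le1 s t | le2 s t =>
    have hs := Trm.val_congr (w := w) (w' := w') hφ.1 fun n hn => h n (lt_max_of_lt_left hn)
    have ht := Trm.val_congr (w := w) (w' := w') hφ.2 fun n hn => h n (lt_max_of_lt_right hn)
    simp only [QF.eval, hs, ht]
  | not φ ih => exact not_congr (ih hφ h)
  | and φ ψ ihφ ihψ =>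
    exact and_congr (ihφ hφ.1 fun n hn => h n (lt_max_of_lt_left hn))
      (ihψ hφ.2 fun n hn => h n (lt_max_of_lt_right hn))
  | or φ ψ ihφ ihψ =>
    exact or_congr (ihφ hφ.1 fun n hn => h n (lt_max_of_lt_left hn))
      (ihψ hφ.2 fun n hn => h n (lt_max_of_lt_right hn))

theorem sat2_iff_sat1_of_noAvar {φ : QF} (hφ : φ.NoAvar) :
    Sat2 r1 r2 δ φ ↔ Sat1 r1 r2 δ φ :=
  ⟨fun ⟨v, hv, he⟩ => ⟨v, hv, he v hv⟩,
    fun ⟨v, hv, he⟩ => ⟨v, hv, fun _ _ => (QF.eval_congr hφ fun _ _ => rfl).1 he⟩⟩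

theorem sat1_mono {δ' : Ordinal} (h : δ ≤ δ') {φ : QF} : Sat1 r1 r2 δ φ → Sat1 r1 r2 δ' φ :=
  fun ⟨v, hv, he⟩ => ⟨v, fun n => (hv n).trans_le h, he⟩

theorem le1_of_le2 (h : le2 α β) : le1 α β := by
  obtain ⟨hαβ, h2⟩ := le2_iff_sig2Elem.1 h
  refine le1_iff_sig1Elem.2 ⟨hαβ, fun φ hna hφ => ?_⟩
  simpa only [sat2_iff_sat1_of_noAvar hna] using h2 φ hφ

theorem le1_of_le1_of_mem_Icc {y : Ordinal} (h : le1 y β) (hw : α ∈ Set.Icc y β) : le1 y α := by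
  obtain ⟨-, hβ⟩ := le1_iff_sig1Elem.1 h
  exact le1_iff_sig1Elem.2 ⟨hw.1, fun φ hna hφ =>
    ⟨sat1_mono hw.1, fun hs => (hβ φ hna hφ).2 (sat1_mono hw.2 hs)⟩⟩

theorem isSuccLimit_of_lt1 (h : lt1 α β) : IsSuccLimit α := by
  obtain ⟨h1, hαβ⟩ := h
  have down : ∀ φ : QF, φ.NoAvar → φ.CstBelow α → Sat1 le1 le2 β φ → Sat1 le1 le2 α φ :=
    fun φ hna hφ => ((le1_iff_sig1Elem.1 h1).2 φ hna hφ).2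
  obtain ⟨v, hv, -⟩ := down (.le (.evar 0) (.evar 0)) ⟨trivial, trivial⟩ ⟨trivial, trivial⟩
    ⟨fun _ => α, fun _ => hαβ, le_rfl⟩
  refine Ordinal.isSuccLimit_iff.2 ⟨(zero_le.trans_lt (hv 0)).ne',
    isSuccPrelimit_of_succ_lt fun γ hγ => ?_⟩
  obtain ⟨v, hv, hgt⟩ := down (.not (.le (.evar 0) (.cst γ))) ⟨trivial, trivial⟩ ⟨trivial, hγ⟩
    ⟨fun _ => α, fun _ => hαβ, hγ.not_ge⟩
  exact (succ_le_of_lt (not_le.1 hgt)).trans_lt (hv 0)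

theorem le1_of_forall_le1 {y : Ordinal} (hα : IsSuccLimit α) (hy : y < α)
    (H : ∀ w, y ≤ w → w < α → le1 y w) : le1 y α := by
  refine le1_iff_sig1Elem.2 ⟨hy.le, fun φ hna hφ => ⟨sat1_mono hy.le, ?_⟩⟩
  rintro ⟨v, hv, he⟩
  set N := φ.evarBound
  set γ := max y ((Finset.range N).sup v)
  have hγ : γ < α :=
    max_lt hy ((Finset.sup_lt_iff (bot_le.trans_lt hy)).2 fun n _ => hv n)
  let v' : ℕ → Ordinal := fun n => if n < N then v n else y
  have hv' : ∀ n, v' n < succ γ := by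
    intro n
    refine lt_succ_of_le ?_
    by_cases hn : n < N
    · simpa only [v', if_pos hn] using
        (Finset.le_sup (f := v) (Finset.mem_range.2 hn)).trans (le_max_right _ _)
    · simpa only [v', if_neg hn] using le_max_left _ _
  have hle1 := H (succ γ) ((le_max_left _ _).trans (le_succ γ)) (hα.succ_lt hγ)
  exact ((le1_iff_sig1Elem.1 hle1).2 φ hna hφ).2
    ⟨v', hv', (QF.eval_congr hna fun n hn => (if_pos hn).symm).1 he⟩

def bigAnd (L : List QF) : QF := L.foldr .and (.le (.evar 0) (.evar 0))

theorem eval_bigAnd {L : List QF} : (bigAnd L).eval r1 r2 v w ↔ ∀ ψ ∈ L, ψ.eval r1 r2 v w := by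
  induction L with
  | nil => exact iff_of_true le_rfl fun _ h => absurd h List.not_mem_nil
  | cons ψ L ih => exact (and_congr_right' ih).trans List.forall_mem_cons.symm

theorem cstBelow_bigAnd {L : List QF} (h : ∀ ψ ∈ L, ψ.CstBelow δ) : (bigAnd L).CstBelow δ := by
  induction L with
  | nil => exact ⟨trivial, trivial⟩
  | cons ψ L ih => exact ⟨h ψ List.mem_cons_self, ih fun χ hχ => h χ (List.mem_cons_of_mem _ hχ)⟩

open Classical in
def lit (P : Prop) (φ : QF) : QF := if P then φ else .not φ

theorem eval_lit {P : Prop} {φ : QF} : (lit P φ).eval r1 r2 v w ↔ (P ↔ φ.eval r1 r2 v w) := by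
  unfold lit
  split_ifs with hP <;> simp only [hP, QF.eval, true_iff, false_iff]

theorem cstBelow_lit {P : Prop} {φ : QF} (h : φ.CstBelow δ) : (lit P φ).CstBelow δ := by
  unfold lit
  split_ifs <;> exact h

def copyTrm (Y : Finset Ordinal) (a : Ordinal) : Trm :=
  if a ∈ Y then .evar (Y.toList.idxOf a) else .cst a

def copyMap (Y : Finset Ordinal) (v : ℕ → Ordinal) (a : Ordinal) : Ordinal :=
  if a ∈ Y then v (Y.toList.idxOf a) else a

variable {A Y : Finset Ordinal}

theorem val_copyTrm {a : Ordinal} : (copyTrm Y a).val v w = copyMap Y v a := by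
  unfold copyTrm copyMap
  split_ifs <;> rfl

theorem cstBelow_copyTrm {a : Ordinal} (h : a ∉ Y → a < δ) : (copyTrm Y a).CstBelow δ := by
  unfold copyTrm
  split_ifs with ha
  exacts [trivial, h ha]

theorem copyMap_of_mem {a : Ordinal} (h : a ∈ Y) : copyMap Y v a = v (Y.toList.idxOf a) :=
  if_pos h

theorem copyMap_of_notMem {a : Ordinal} (h : a ∉ Y) : copyMap Y v a = a :=
  if_neg h

theorem copyMap_getD_eq_id (d : Ordinal) : copyMap Y (Y.toList.getD · d) = id := by
  funext a
  by_cases ha : a ∈ Y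
  · have hlt : Y.toList.idxOf a < Y.toList.length :=
      List.idxOf_lt_length_iff.2 (Finset.mem_toList.2 ha)
    rw [copyMap_of_mem ha, List.getD_eq_getElem _ _ hlt, List.getElem_idxOf hlt, id]
  · exact copyMap_of_notMem ha

theorem IsoOn.injOn {h : Ordinal → Ordinal} {S : Set Ordinal} (hh : IsoOn h S) : S.InjOn h :=
  fun x hx y hy hxy => le_antisymm ((hh x hx y hy).1.2 hxy.le) ((hh y hy x hx).1.2 hxy.ge)

open Classical in
def copyFormula (A Y : Finset Ordinal) (η β : Ordinal) : QF :=
  bigAnd <|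
    (A.toList.flatMap fun a => A.toList.flatMap fun b =>
      [lit (a ≤ b) (.le (copyTrm Y a) (copyTrm Y b)),
        lit (le1 a b) (.le1 (copyTrm Y a) (copyTrm Y b)),
        lit (le2 a b) (.le2 (copyTrm Y a) (copyTrm Y b))]) ++
    (Y.toList.map fun y => .not (.le (copyTrm Y y) (.cst η))) ++
    ((Y.toList.filter (lt1 · β)).map fun y =>
      .or (.not (.le (copyTrm Y y) (.avar 0))) (.le1 (copyTrm Y y) (.avar 0)))

theorem cstBelow_copyFormula (hA : ∀ a ∈ A, a ∉ Y → a < δ) (hη : η < δ) :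
    (copyFormula A Y η β).CstBelow δ := by
  unfold copyFormula
  refine cstBelow_bigAnd fun ψ hψ => ?_
  simp only [List.mem_append, List.mem_flatMap, List.mem_map, List.mem_cons, List.mem_filter,
    Finset.mem_toList, List.not_mem_nil, or_false] at hψ
  rcases hψ with (⟨a, ha, b, hb, hψ⟩ | ⟨y, hy, rfl⟩) | ⟨y, ⟨hy, -⟩, rfl⟩
  · have hab := And.intro (cstBelow_copyTrm (hA a ha)) (cstBelow_copyTrm (hA b hb))
    rcases hψ with rfl | rfl | rfl <;> exact cstBelow_lit hab
  · exact ⟨cstBelow_copyTrm (absurd hy), hη⟩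
  · have hy := cstBelow_copyTrm (δ := δ) (absurd hy)
    exact ⟨⟨hy, trivial⟩, hy, trivial⟩

theorem eval_copyFormula : (copyFormula A Y η β).eval le1 le2 v w ↔
    IsoOn (copyMap Y v) A ∧ (∀ y ∈ Y, η < copyMap Y v y) ∧
      ∀ y ∈ Y, lt1 y β → copyMap Y v y ≤ w 0 → le1 (copyMap Y v y) (w 0) := by
  simp only [copyFormula, eval_bigAnd, List.forall_mem_append, List.forall_mem_flatMap,
    List.forall_mem_map, List.forall_mem_cons, List.forall_mem_filter, eval_lit, QF.eval,
    val_copyTrm, Finset.mem_toList, IsoOn, Finset.mem_coe, not_le, decide_eq_true_eq]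
  simp only [Trm.val, List.not_mem_nil, IsEmpty.forall_iff, implies_true, and_true, and_assoc,
    or_iff_not_imp_left, not_lt]

theorem sat2_copyFormula_iff : Sat2 le1 le2 δ (copyFormula A Y η β) ↔
    ∃ v : ℕ → Ordinal, (∀ n, v n < δ) ∧ IsoOn (copyMap Y v) A ∧ (∀ y ∈ Y, η < copyMap Y v y) ∧
      ∀ y ∈ Y, lt1 y β → ∀ w < δ, copyMap Y v y ≤ w → le1 (copyMap Y v y) w := by
  refine exists_congr fun v => and_congr_right fun hv => ?_
  simp only [eval_copyFormula]
  constructor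
  · intro H
    obtain ⟨hiso, hη, -⟩ := H v hv
    exact ⟨hiso, hη, fun y hy hyβ w hw => (H (fun _ => w) fun _ => hw).2.2 y hy hyβ⟩
  · rintro ⟨hiso, hη, hcon⟩ w hw
    exact ⟨hiso, hη, fun y hy hyβ => hcon y hy hyβ (w 0) (hw 0)⟩

theorem exists_copy_of_lt2 (h2 : lt2 α β) (hA : ∀ a ∈ A, a ∉ Y → a < α)
    (hY : ∀ y ∈ Y, η < y ∧ y < β) (hη : η < α) :
    ∃ h : Ordinal → Ordinal, (∀ a, a ∉ Y → h a = a) ∧ IsoOn h A ∧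
      (∀ y ∈ Y, η < h y ∧ h y < α) ∧ ∀ y ∈ Y, lt1 y β → lt1 (h y) α := by
  have hβ : Sat2 le1 le2 β (copyFormula A Y η β) := by
    refine sat2_copyFormula_iff.2 ⟨(Y.toList.getD · α), fun n => ?_, ?_⟩
    · dsimp only
      rcases lt_or_ge n Y.toList.length with hn | hn
      · rw [List.getD_eq_getElem _ _ hn]
        exact (hY _ (Finset.mem_toList.1 (List.getElem_mem hn))).2
      · rw [List.getD_eq_default _ _ hn]
        exact h2.2
    · rw [copyMap_getD_eq_id]
      exact ⟨fun _ _ _ _ => ⟨Iff.rfl, Iff.rfl, Iff.rfl⟩, fun y hy => (hY y hy).1,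
        fun y _ hyβ w hw hyw => le1_of_le1_of_mem_Icc hyβ.1 ⟨hyw, hw.le⟩⟩
  obtain ⟨v, hv, hiso, hηv, hcon⟩ := sat2_copyFormula_iff.1
    (((le2_iff_sig2Elem.1 h2.1).2 _ (cstBelow_copyFormula hA hη)).2 hβ)
  have hα : ∀ y ∈ Y, copyMap Y v y < α := fun y hy => copyMap_of_mem hy ▸ hv _
  refine ⟨copyMap Y v, fun a => copyMap_of_notMem, hiso, fun y hy => ⟨hηv y hy, hα y hy⟩,
    fun y hy hyβ => ⟨?_, hα y hy⟩⟩
  exact le1_of_forall_le1 (isSuccLimit_of_lt1 ⟨le1_of_le2 h2.1, h2.2⟩) (hα y hy)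
    fun w hyw hw => hcon y hy hyβ w hw hyw

end R2

theorem cofinal_copies_below_alpha_maintaining_le1_general (α β : Ordinal) (h2 : R2.lt2 α β)
    (X Y : Finset Ordinal) (hX : ∀ x ∈ X, x < α) (hY : ∀ y ∈ Y, α ≤ y ∧ y < β) :
    ∀ η < α, ∃ Ytil : Finset Ordinal,
      (∀ y ∈ Ytil, y < α) ∧ (∀ y ∈ Ytil, η < y) ∧ (∀ x ∈ X, ∀ y ∈ Ytil, x < y) ∧
      ∃ h : Ordinal → Ordinal,
        Set.BijOn h ↑(X ∪ Y) ↑(X ∪ Ytil) ∧ (∀ x ∈ X, h x = x) ∧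
        h '' ↑Y = ↑Ytil ∧ R2.IsoOn h ↑(X ∪ Y) ∧
        ∀ y ∈ Y, R2.lt1 y β → R2.lt1 (h y) α := by
  intro η hη
  have hXY : ∀ x ∈ X, x ∉ Y := fun x hx hxY => (hX x hx).not_ge (hY x hxY).1
  obtain ⟨h, hfix, hiso, hcopy, hcon⟩ := R2.exists_copy_of_lt2 h2
    (A := X ∪ Y) (η := η) (fun a ha haY => hX a ((Finset.mem_union.1 ha).resolve_right haY))
    (fun y hy => ⟨hη.trans_le (hY y hy).1, (hY y hy).2⟩) hη
  have hfixX : ∀ x ∈ X, h x = x := fun x hx => hfix x (hXY x hx)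
  have hXlt : ∀ x ∈ X, ∀ y ∈ Y, x < h y := fun x hx y hy => lt_of_not_ge fun hyx =>
    ((hX x hx).trans_le (hY y hy).1).not_ge <| (hiso y (by simp [hy]) x (by simp [hx])).1.2
      (by rwa [hfixX x hx])
  have himage : h '' ↑(X ∪ Y) = ↑(X ∪ Y.image h) := by
    rw [Finset.coe_union, Set.image_union, Set.EqOn.image_eq_self hfixX, Finset.coe_union,
      Finset.coe_image]
  refine ⟨Y.image h, ?_, ?_, ?_, h, himage ▸ hiso.injOn.bijOn_image, hfixX, Finset.coe_image.symm,
    hiso, hcon⟩ <;>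
    simp only [Finset.mem_image, forall_exists_index, and_imp, forall_apply_eq_imp_iff₂]
  · exact fun y hy => (hcopy y hy).2
  · exact fun y hy => (hcopy y hy).1
  · exact hXlt

/-- If `α <₂ β` in `R₂`, then cofinally in `α` there are copies of any finite
`Y ⊆ [α, β)` (over `X ⊆ α`) maintaining `≤₁`-connections to `β`. -/
theorem cofinal_copies_below_alpha_maintaining_le1 (α β : Ordinal) (h2 : R2.lt2 α β)
    (X Y : Finset Ordinal) (hX : ∀ x ∈ X, x < α) (hY : ∀ y ∈ Y, α ≤ y ∧ y < β)
    (hYne : Y.Nonempty) :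
    ∀ η < α, ∃ Ytil : Finset Ordinal,
      (∀ y ∈ Ytil, y < α) ∧ (∀ y ∈ Ytil, η < y) ∧ (∀ x ∈ X, ∀ y ∈ Ytil, x < y) ∧
      ∃ h : Ordinal → Ordinal,
        Set.BijOn h ↑(X ∪ Y) ↑(X ∪ Ytil) ∧ (∀ x ∈ X, h x = x) ∧
        h '' ↑Y = ↑Ytil ∧ R2.IsoOn h ↑(X ∪ Y) ∧
        ∀ y ∈ Y, R2.lt1 y β → R2.lt1 (h y) α :=
  cofinal_copies_below_alpha_maintaining_le1_general α β h2 X Y hX hY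
end
end

section
/- In the structure R₂, the relation ≤₂ is a forest: for all ordinals a, b, c, if a ≤ b, a ≤₂ c, and b ≤₂ c, then a ≤₂ b; in particular the set of <₂-predecessors of any ordinal is linearly ordered by ≤₂. -/
open Ordinal

noncomputable section

namespace R2

lemma trm_cstBelow_mono {α δ : Ordinal} (h : α ≤ δ) :
    ∀ {t : Trm}, t.CstBelow α → t.CstBelow δ
  | .evar _, _ => trivial
  | .avar _, _ => trivial
  | .cst _, hc => lt_of_lt_of_le hc h

lemma qf_cstBelow_mono {α δ : Ordinal} (h : α ≤ δ) {φ : QF}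
    (hc : φ.CstBelow α) : φ.CstBelow δ := by
  induction φ with
  | le s t => exact ⟨trm_cstBelow_mono h hc.1, trm_cstBelow_mono h hc.2⟩
  | le1 s t => exact ⟨trm_cstBelow_mono h hc.1, trm_cstBelow_mono h hc.2⟩
  | le2 s t => exact ⟨trm_cstBelow_mono h hc.1, trm_cstBelow_mono h hc.2⟩
  | not ψ ih => exact ih hc
  | and ψ χ ih1 ih2 => exact ⟨ih1 hc.1, ih2 hc.2⟩
  | or ψ χ ih1 ih2 => exact ⟨ih1 hc.1, ih2 hc.2⟩

lemma trm_val_lt {δ : Ordinal} {v w : ℕ → Ordinal}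
    (hv : ∀ n, v n < δ) (hw : ∀ n, w n < δ) :
    ∀ {t : Trm}, t.CstBelow δ → t.val v w < δ
  | .evar n, _ => hv n
  | .avar n, _ => hw n
  | .cst _, hc => hc

lemma eval_congr {r1 r2 r1' r2' : Ordinal → Ordinal → Prop} {δ : Ordinal}
    (h1 : ∀ x y, x < δ → y < δ → (r1 x y ↔ r1' x y))
    (h2 : ∀ x y, x < δ → y < δ → (r2 x y ↔ r2' x y))
    {v w : ℕ → Ordinal} (hv : ∀ n, v n < δ) (hw : ∀ n, w n < δ) :
    ∀ {φ : QF}, φ.CstBelow δ → (φ.eval r1 r2 v w ↔ φ.eval r1' r2' v w)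
  | .le _ _, _ => Iff.rfl
  | .le1 s t, hc => h1 _ _ (trm_val_lt hv hw hc.1) (trm_val_lt hv hw hc.2)
  | .le2 s t, hc => h2 _ _ (trm_val_lt hv hw hc.1) (trm_val_lt hv hw hc.2)
  | .not _, hc => not_congr (eval_congr h1 h2 hv hw hc)
  | .and _ _, hc => and_congr (eval_congr h1 h2 hv hw hc.1) (eval_congr h1 h2 hv hw hc.2)
  | .or _ _, hc => or_congr (eval_congr h1 h2 hv hw hc.1) (eval_congr h1 h2 hv hw hc.2)

lemma sat2_congr {r1 r2 r1' r2' : Ordinal → Ordinal → Prop} {δ : Ordinal}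
    (h1 : ∀ x y, x < δ → y < δ → (r1 x y ↔ r1' x y))
    (h2 : ∀ x y, x < δ → y < δ → (r2 x y ↔ r2' x y))
    {φ : QF} (hc : φ.CstBelow δ) : Sat2 r1 r2 δ φ ↔ Sat2 r1' r2' δ φ := by
  unfold Sat2
  refine exists_congr fun v => and_congr_right fun hv => ?_
  refine forall_congr' fun w => imp_congr_right fun hw => ?_
  exact eval_congr h1 h2 hv hw hc

lemma leAux_unfold (β : Ordinal) (i : Bool) (α : Ordinal) :
    leAux β i α =
      (α ≤ β ∧
        (match i with | false => Sig1Elem | true => Sig2Elem)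
          (fun x y => ∃ _ : y < β, le1 x y)
          (fun x y => ∃ _ : y < β, le2 x y) α β) := by
  unfold leAux
  rw [WellFounded.fix_eq]
  rfl

lemma le2_iff (α β : Ordinal) :
    le2 α β ↔ α ≤ β ∧
      ∀ φ : QF, φ.CstBelow α → (Sat2 le1 le2 α φ ↔ Sat2 le1 le2 β φ) := by
  have h1 : ∀ x y : Ordinal, x < β → y < β →
      ((∃ _ : y < β, le1 x y) ↔ le1 x y) :=
    fun x y _ hy => ⟨fun ⟨_, h⟩ => h, fun h => ⟨hy, h⟩⟩
  have h2 : ∀ x y : Ordinal, x < β → y < β →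
      ((∃ _ : y < β, le2 x y) ↔ le2 x y) :=
    fun x y _ hy => ⟨fun ⟨_, h⟩ => h, fun h => ⟨hy, h⟩⟩
  rw [show le2 α β = leAux β true α from rfl, leAux_unfold]
  refine and_congr_right fun hab => ?_
  show Sig2Elem _ _ α β ↔ _
  unfold Sig2Elem
  refine forall_congr' fun φ => imp_congr_right fun hc => ?_
  have hcβ : φ.CstBelow β := qf_cstBelow_mono hab hc
  have hα := sat2_congr (δ := α)
    (fun x y hx hy => h1 x y (lt_of_lt_of_le hx hab) (lt_of_lt_of_le hy hab))
    (fun x y hx hy => h2 x y (lt_of_lt_of_le hx hab) (lt_of_lt_of_le hy hab))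
    (qf_cstBelow_mono le_rfl hc)
  have hβ := sat2_congr (δ := β) h1 h2 hcβ
  rw [hα, hβ]

end R2

/-- In `R₂`, `≤₂` is a forest; in particular the `<₂`-predecessors of any
ordinal are linearly ordered by `≤₂`. -/
theorem le2_forest :
    (∀ a b c : Ordinal, a ≤ b → R2.le2 a c → R2.le2 b c → R2.le2 a b) ∧
    (∀ c a b : Ordinal, R2.lt2 a c → R2.lt2 b c → (R2.le2 a b ∨ R2.le2 b a)) := by
  have forest : ∀ a b c : Ordinal, a ≤ b → R2.le2 a c → R2.le2 b c → R2.le2 a b := by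
    intro a b c hab hac hbc
    rw [R2.le2_iff] at hac hbc ⊢
    refine ⟨hab, fun φ hc => ?_⟩
    exact (hac.2 φ hc).trans ((hbc.2 φ (R2.qf_cstBelow_mono hab hc)).symm)
  refine ⟨forest, fun c a b hac hbc => ?_⟩
  rcases le_total a b with h | h
  · exact Or.inl (forest a b c h hac.1 hbc.1)
  · exact Or.inr (forest b a c h hbc.1 hac.1)

end
end
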